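/- Let (X,e) be a quasi-metric space and T : X → X uniformly continuous (for all ε > 0 there is δ > 0 such that e(x,y) < δ implies e(Tx,Ty) < ε). Then for every natural number m ≥ 1, h''(T^m) = m·h''(T). -/
import Mathlib


open Filter Set
open scoped ENNReal

variable {X : Type*}

/-- A quasi-metric: nonnegative, vanishing exactly on the diagonal, triangle
inequality; symmetry is NOT assumed. -/
def IsQuasiMetric (e : X → X → ℝ) : Prop :=
  (∀ x y, 0 ≤ e x y) ∧ (∀ x y, e x y = 0 ↔ x = y) ∧ (∀ x y z, e x z ≤ e x y + e y z)

/-- The dynamical distance `e_n(x,y) = max_{0 ≤ i ≤ n-1} e(T^i x, T^i y)`. -/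
noncomputable def dynDist (e : X → X → ℝ) (T : X → X) (n : ℕ) (x y : X) : ℝ :=
  ⨆ i : Fin n, e (T^[(i : ℕ)] x) (T^[(i : ℕ)] y)

/-- The symmetric ball `B(x,e,ε) = {y : e(x,y) < ε ∧ e(y,x) < ε}`. -/
def qball (e : X → X → ℝ) (x : X) (ε : ℝ) : Set X := {y | e x y < ε ∧ e y x < ε}

/-- The topology generated by symmetric `e`-balls. -/
def qtop (e : X → X → ℝ) : TopologicalSpace X :=
  TopologicalSpace.generateFrom {B | ∃ x ε, 0 < ε ∧ B = qball e x ε}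

/-- The topology generated by the open balls of a (symmetric) distance `d`. -/
def mtop (d : X → X → ℝ) : TopologicalSpace X :=
  TopologicalSpace.generateFrom {B | ∃ x ε, 0 < ε ∧ B = {y | d x y < ε}}

/-- `(n,ε)`-spanning set of `K` w.r.t. the quasi-metric `e` and `T` (primed version:
both `e_n(x,y) ≤ ε` and `e_n(y,x) ≤ ε`). -/
def IsSpan (e : X → X → ℝ) (T : X → X) (n : ℕ) (ε : ℝ) (K F : Set X) : Prop :=
  ∀ x ∈ K, ∃ y ∈ F, dynDist e T n x y ≤ ε ∧ dynDist e T n y x ≤ ε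

/-- `(n,ε)`-separated set w.r.t. `e` and `T` (primed version: `e_n(x,y) > ε` OR
`e_n(y,x) > ε` for distinct points). -/
def IsSep (e : X → X → ℝ) (T : X → X) (n : ℕ) (ε : ℝ) (E : Set X) : Prop :=
  ∀ x ∈ E, ∀ y ∈ E, x ≠ y → ε < dynDist e T n x y ∨ ε < dynDist e T n y x

/-- `r'_n(ε,K,T)`: smallest cardinality of an `(n,ε)`-spanning set of `K`. -/
noncomputable def spanCard (e : X → X → ℝ) (T : X → X) (n : ℕ) (ε : ℝ) (K : Set X) : ℕ∞ :=
  ⨅ (F : Set X) (_ : IsSpan e T n ε K F), F.encard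

/-- `s'_n(ε,K,T)`: largest cardinality of an `(n,ε)`-separated subset of `K`. -/
noncomputable def sepCard (e : X → X → ℝ) (T : X → X) (n : ℕ) (ε : ℝ) (K : Set X) : ℕ∞ :=
  ⨆ (E : Set X) (_ : E ⊆ K ∧ IsSep e T n ε E), E.encard

/-- `(ε,n)`-spanning set (double-primed version: `e_n(x,y) ≤ ε` OR `e_n(y,x) ≤ ε`). -/
def IsSpanOr (e : X → X → ℝ) (T : X → X) (n : ℕ) (ε : ℝ) (K F : Set X) : Prop :=
  ∀ x ∈ K, ∃ y ∈ F, dynDist e T n x y ≤ ε ∨ dynDist e T n y x ≤ ε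

/-- `(ε,n)`-separated set (double-primed version: `e_n(x,y) > ε` AND `e_n(y,x) > ε`). -/
def IsSepAnd (e : X → X → ℝ) (T : X → X) (n : ℕ) (ε : ℝ) (E : Set X) : Prop :=
  ∀ x ∈ E, ∀ y ∈ E, x ≠ y → ε < dynDist e T n x y ∧ ε < dynDist e T n y x

/-- `r''_n(ε,K,T)`. -/
noncomputable def spanCardOr (e : X → X → ℝ) (T : X → X) (n : ℕ) (ε : ℝ) (K : Set X) : ℕ∞ :=
  ⨅ (F : Set X) (_ : IsSpanOr e T n ε K F), F.encard

/-- `s''_n(ε,K,T)`. -/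
noncomputable def sepCardAnd (e : X → X → ℝ) (T : X → X) (n : ℕ) (ε : ℝ) (K : Set X) : ℕ∞ :=
  ⨆ (E : Set X) (_ : E ⊆ K ∧ IsSepAnd e T n ε E), E.encard

/-- `(n,ε)`-spanning set of `K` w.r.t. a (symmetric) metric `d` and `T`. -/
def IsMSpan (d : X → X → ℝ) (T : X → X) (n : ℕ) (ε : ℝ) (K F : Set X) : Prop :=
  ∀ x ∈ K, ∃ y ∈ F, dynDist d T n x y ≤ ε

/-- `r_n(ε,K,T,d)` for a metric `d`. -/
noncomputable def mSpanCard (d : X → X → ℝ) (T : X → X) (n : ℕ) (ε : ℝ) (K : Set X) : ℕ∞ :=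
  ⨅ (F : Set X) (_ : IsMSpan d T n ε K F), F.encard

/-- The topological entropy `h'_e(T)` of `T` on the quasi-metric space `(X,e)`,
via (primed) spanning sets.  Since `ε ↦ r'_n(ε,K,T)` is antitone, the limit as
`ε → 0` is the supremum over `ε > 0`. -/
noncomputable def entropy' (e : X → X → ℝ) (T : X → X) : EReal :=
  ⨆ (K : Set X) (_ : @IsCompact X (qtop e) K), ⨆ (ε : ℝ) (_ : 0 < ε),
    Filter.atTop.limsup fun n : ℕ =>
      ((n : ℝ)⁻¹ : EReal) * ENNReal.log ((spanCard e T n ε K : ℝ≥0∞))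

/-- The Bowen–Dinaburg topological entropy `h_d(T)` of `T` w.r.t. a metric `d`,
via spanning sets over compact subsets. -/
noncomputable def entropyM (d : X → X → ℝ) (T : X → X) : EReal :=
  ⨆ (K : Set X) (_ : @IsCompact X (mtop d) K), ⨆ (ε : ℝ) (_ : 0 < ε),
    Filter.atTop.limsup fun n : ℕ =>
      ((n : ℝ)⁻¹ : EReal) * ENNReal.log ((mSpanCard d T n ε K : ℝ≥0∞))

/-- The topological entropy `h''_e(T)` via (double-primed) spanning sets. -/
noncomputable def entropy'' (e : X → X → ℝ) (T : X → X) : EReal :=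
  ⨆ (K : Set X) (_ : @IsCompact X (qtop e) K), ⨆ (ε : ℝ) (_ : 0 < ε),
    Filter.atTop.limsup fun n : ℕ =>
      ((n : ℝ)⁻¹ : EReal) * ENNReal.log ((spanCardOr e T n ε K : ℝ≥0∞))


section AuxLemmas

lemma le_dynDist (e : X → X → ℝ) (T : X → X) {n i : ℕ} (hi : i < n) (x y : X) :
    e (T^[i] x) (T^[i] y) ≤ dynDist e T n x y :=
  le_ciSup (f := fun j : Fin n => e (T^[(j : ℕ)] x) (T^[(j : ℕ)] y))
    (Set.Finite.bddAbove (Set.finite_range _)) (⟨i, hi⟩ : Fin n)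

lemma dynDist_le {e : X → X → ℝ} {T : X → X} {n : ℕ} {c : ℝ} (hc : 0 ≤ c) {x y : X}
    (h : ∀ i, i < n → e (T^[i] x) (T^[i] y) ≤ c) : dynDist e T n x y ≤ c :=
  Real.iSup_le (fun i => h i i.2) hc

lemma dynDist_nonneg {e : X → X → ℝ} (he : ∀ x y, 0 ≤ e x y) (T : X → X) (n : ℕ) (x y : X) :
    0 ≤ dynDist e T n x y := by
  rcases Nat.eq_zero_or_pos n with rfl | hn
  · simp [dynDist]
  · exact (he x y).trans (by simpa using le_dynDist e T hn x y)

lemma dynDist_mono_n {e : X → X → ℝ} (he : ∀ x y, 0 ≤ e x y) (T : X → X) {n n' : ℕ}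
    (h : n ≤ n') (x y : X) : dynDist e T n x y ≤ dynDist e T n' x y :=
  dynDist_le (dynDist_nonneg he T n' x y) fun i hi => le_dynDist e T (hi.trans_le h) x y

lemma dynDist_iterate_le {e : X → X → ℝ} (he : ∀ x y, 0 ≤ e x y) (T : X → X) {m : ℕ}
    (hm : 0 < m) (n : ℕ) (x y : X) :
    dynDist e (T^[m]) n x y ≤ dynDist e T (m * n) x y := by
  refine dynDist_le (dynDist_nonneg he T _ x y) fun i hi => ?_
  have h1 : (T^[m])^[i] = T^[m * i] := (Function.iterate_mul T m i).symm
  rw [h1]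
  exact le_dynDist e T ((Nat.mul_lt_mul_left hm).2 hi) x y

end AuxLemmas

section SpanLemmas

variable {e : X → X → ℝ} {T : X → X}

lemma spanCardOr_mono_n (he : ∀ x y, 0 ≤ e x y) {n n' : ℕ} (h : n ≤ n') (ε : ℝ) (K : Set X) :
    spanCardOr e T n ε K ≤ spanCardOr e T n' ε K := by
  refine le_iInf₂ fun F hF => iInf₂_le F fun x hx => ?_
  obtain ⟨y, hy, hd⟩ := hF x hx
  exact ⟨y, hy, hd.imp (le_trans (dynDist_mono_n he T h x y))
    (le_trans (dynDist_mono_n he T h y x))⟩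

lemma spanCardOr_iterate_le (he : ∀ x y, 0 ≤ e x y) {m : ℕ} (hm : 0 < m) (n : ℕ) (ε : ℝ)
    (K : Set X) : spanCardOr e (T^[m]) n ε K ≤ spanCardOr e T (m * n) ε K := by
  refine le_iInf₂ fun F hF => iInf₂_le F fun x hx => ?_
  obtain ⟨y, hy, hd⟩ := hF x hx
  exact ⟨y, hy, hd.imp (le_trans (dynDist_iterate_le he T hm n x y))
    (le_trans (dynDist_iterate_le he T hm n y x))⟩

lemma unif_iter (hT : ∀ ε : ℝ, 0 < ε → ∃ δ : ℝ, 0 < δ ∧ ∀ x y, e x y < δ → e (T x) (T y) < ε)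
    {ε : ℝ} (hε : 0 < ε) (k : ℕ) :
    ∃ δ : ℝ, 0 < δ ∧ ∀ x y, e x y < δ → ∀ i ≤ k, e (T^[i] x) (T^[i] y) < ε := by
  induction k with
  | zero => exact ⟨ε, hε, fun x y h i hi => by simpa [Nat.le_zero.1 hi] using h⟩
  | succ k ih =>
    obtain ⟨δ, hδ, hδ'⟩ := ih
    obtain ⟨δ', hδ'pos, hδ''⟩ := hT δ hδ
    refine ⟨min δ' ε, lt_min hδ'pos hε, fun x y h i hi => ?_⟩
    rcases Nat.eq_zero_or_pos i with rfl | hipos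
    · simpa using h.trans_le (min_le_right _ _)
    · obtain ⟨j, rfl⟩ := Nat.exists_eq_succ_of_ne_zero hipos.ne'
      have h2 := hδ' (T x) (T y) (hδ'' x y (h.trans_le (min_le_left _ _))) j
        (Nat.lt_succ_iff.1 (Nat.succ_le_iff.1 hi))
      rw [Function.iterate_succ_apply, Function.iterate_succ_apply]
      exact h2

/-- Key transfer: a `(n, δ/2)`-spanning set for `T^[m]` is an `(m*n, ε)`-spanning set for `T`. -/
lemma dynDist_transfer (he : ∀ x y, 0 ≤ e x y) {m : ℕ} (hm : 0 < m) {ε δ : ℝ} (hε : 0 < ε)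
    (hδ : 0 < δ)
    (hP : ∀ x y, e x y < δ → ∀ i ≤ m - 1, e (T^[i] x) (T^[i] y) < ε)
    {n : ℕ} {x y : X} (h : dynDist e (T^[m]) n x y ≤ δ / 2) :
    dynDist e T (m * n) x y ≤ ε := by
  refine dynDist_le hε.le fun j hj => ?_
  have hjn : j / m < n := Nat.div_lt_of_lt_mul hj
  have h1 : e (T^[m * (j / m)] x) (T^[m * (j / m)] y) ≤ δ / 2 := by
    have h0 := le_dynDist e (T^[m]) hjn x y
    rw [← Function.iterate_mul] at h0
    exact h0.trans h
  have h2 := hP _ _ (h1.trans_lt (half_lt_self hδ)) (j % m)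
    (Nat.le_sub_one_of_lt (Nat.mod_lt _ hm))
  rw [← Function.iterate_add_apply, ← Function.iterate_add_apply, Nat.mod_add_div] at h2
  exact h2.le

lemma spanCardOr_transfer (he : ∀ x y, 0 ≤ e x y) {m : ℕ} (hm : 0 < m) {ε δ : ℝ} (hε : 0 < ε)
    (hδ : 0 < δ)
    (hP : ∀ x y, e x y < δ → ∀ i ≤ m - 1, e (T^[i] x) (T^[i] y) < ε) (n : ℕ) (K : Set X) :
    spanCardOr e T (m * n) ε K ≤ spanCardOr e (T^[m]) n (δ / 2) K := by
  refine le_iInf₂ fun F hF => iInf₂_le F fun x hx => ?_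
  obtain ⟨y, hy, hd⟩ := hF x hx
  exact ⟨y, hy, hd.imp (dynDist_transfer he hm hε hδ hP)
    (dynDist_transfer he hm hε hδ hP)⟩

end SpanLemmas

section ERealAux

/-- Multiplication by a positive real constant is strictly monotone on `EReal`. -/
lemma ereal_mul_strictMono {r : ℝ} (hr : 0 < r) : StrictMono fun x : EReal => (r : EReal) * x := by
  have key : (fun x : EReal => (r : EReal) * x) = fun a : EReal => a / ((r⁻¹ : ℝ) : EReal) := by
    funext a
    rw [EReal.div_eq_inv_mul, ← EReal.coe_inv, inv_inv]
  rw [key]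
  exact EReal.strictMono_div_right_of_pos (EReal.coe_pos.2 (inv_pos.2 hr)) (EReal.coe_ne_top _)

/-- Multiplication by a positive real constant as an order isomorphism of `EReal`. -/
noncomputable def erealMulIso (r : ℝ) (hr : 0 < r) : EReal ≃o EReal where
  toFun x := (r : EReal) * x
  invFun x := ((r⁻¹ : ℝ) : EReal) * x
  left_inv x := by
    show ((r⁻¹ : ℝ) : EReal) * ((r : EReal) * x) = x
    rw [← mul_assoc, ← EReal.coe_mul, inv_mul_cancel₀ hr.ne', EReal.coe_one, one_mul]
  right_inv x := by
    show ((r : ℝ) : EReal) * (((r⁻¹ : ℝ) : EReal) * x) = x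
    rw [← mul_assoc, ← EReal.coe_mul, mul_inv_cancel₀ hr.ne', EReal.coe_one, one_mul]
  map_rel_iff' := by intro a b; exact (ereal_mul_strictMono hr).le_iff_le

lemma limsup_coe_mul (r : ℝ) (hr : 0 < r) (u : ℕ → EReal) :
    Filter.atTop.limsup (fun n => (r : EReal) * u n) = (r : EReal) * Filter.atTop.limsup u :=
  ((erealMulIso r hr).limsup_apply).symm

lemma limsup_natCast_mul (m : ℕ) (hm : 0 < m) (u : ℕ → EReal) :
    Filter.atTop.limsup (fun n => (m : EReal) * u n) = (m : EReal) * Filter.atTop.limsup u := by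
  have h := limsup_coe_mul (m : ℝ) (by exact_mod_cast hm) u
  simpa [EReal.coe_coe_eq_natCast] using h

lemma natCast_mul_mono {m : ℕ} (hm : 0 < m) {x y : EReal} (h : x ≤ y) :
    (m : EReal) * x ≤ (m : EReal) * y := by
  have := (ereal_mul_strictMono (r := (m : ℝ)) (by exact_mod_cast hm)).monotone h
  simpa [EReal.coe_coe_eq_natCast] using this

lemma inv_mul_eq_div' (n : ℕ) (L : EReal) : ((n : ℝ)⁻¹ : EReal) * L = L / (n : EReal) := by
  rw [EReal.div_eq_inv_mul]
  rfl

lemma natCast_mul_div_cancel {m : ℕ} (hm : 0 < m) (n : ℕ) (x : EReal) :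
    (m : EReal) * (x / ((m * n : ℕ) : EReal)) = x / (n : EReal) := by
  rw [EReal.mul_div, EReal.natCast_mul, mul_comm ((m : ℕ) : EReal) x,
    mul_comm ((m : ℕ) : EReal) ((n : ℕ) : EReal)]
  exact EReal.mul_div_mul_cancel (EReal.natCast_ne_bot m) (EReal.natCast_ne_top m)
    (by exact_mod_cast hm.ne')

end ERealAux

section MainLemmas

variable {e : X → X → ℝ} {T : X → X}

lemma main1 (he0 : ∀ x y, 0 ≤ e x y) {m : ℕ} (hm : 0 < m) (ε : ℝ) (K : Set X) :
    Filter.atTop.limsup (fun n : ℕ =>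
        ((n : ℝ)⁻¹ : EReal) * ENNReal.log ((spanCardOr e (T^[m]) n ε K : ℝ≥0∞)))
      ≤ (m : EReal) * Filter.atTop.limsup (fun n : ℕ =>
        ((n : ℝ)⁻¹ : EReal) * ENNReal.log ((spanCardOr e T n ε K : ℝ≥0∞))) := by
  set c : ℕ → EReal :=
    fun n => ((n : ℝ)⁻¹ : EReal) * ENNReal.log ((spanCardOr e T n ε K : ℝ≥0∞)) with hc
  have step1 : ∀ᶠ n : ℕ in atTop,
      ((n : ℝ)⁻¹ : EReal) * ENNReal.log ((spanCardOr e (T^[m]) n ε K : ℝ≥0∞))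
        ≤ (m : EReal) * c (m * n) := by
    filter_upwards [eventually_ge_atTop 1] with n hn
    simp only [hc, inv_mul_eq_div']
    rw [natCast_mul_div_cancel hm n _]
    refine EReal.monotone_div_right_of_nonneg (Nat.cast_nonneg' n) ?_
    exact ENNReal.log_monotone
      (by exact_mod_cast spanCardOr_iterate_le (T := T) he0 hm n ε K)
  calc Filter.atTop.limsup (fun n : ℕ =>
        ((n : ℝ)⁻¹ : EReal) * ENNReal.log ((spanCardOr e (T^[m]) n ε K : ℝ≥0∞)))
      ≤ Filter.atTop.limsup (fun n : ℕ => (m : EReal) * c (m * n)) :=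
        Filter.limsup_le_limsup step1
    _ = (m : EReal) * Filter.atTop.limsup (fun n : ℕ => c (m * n)) :=
        limsup_natCast_mul m hm _
    _ ≤ (m : EReal) * Filter.atTop.limsup c := by
        refine natCast_mul_mono hm ?_
        have h1 : (fun n : ℕ => c (m * n)) = c ∘ (fun n : ℕ => m * n) := rfl
        rw [h1, Filter.limsup_comp]
        refine Filter.limsup_le_limsup_of_le ?_
        exact Filter.tendsto_atTop_atTop.2
          fun b => ⟨b, fun n hn => hn.trans (Nat.le_mul_of_pos_left n hm)⟩

lemma main2 (he0 : ∀ x y, 0 ≤ e x y) {m : ℕ} (hm : 0 < m) {ε δ : ℝ} (hε : 0 < ε) (hδ : 0 < δ)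
    (hP : ∀ x y, e x y < δ → ∀ i ≤ m - 1, e (T^[i] x) (T^[i] y) < ε) (K : Set X) :
    (m : EReal) * Filter.atTop.limsup (fun n : ℕ =>
        ((n : ℝ)⁻¹ : EReal) * ENNReal.log ((spanCardOr e T n ε K : ℝ≥0∞)))
      ≤ Filter.atTop.limsup (fun n : ℕ =>
        ((n : ℝ)⁻¹ : EReal) * ENNReal.log ((spanCardOr e (T^[m]) n (δ / 2) K : ℝ≥0∞))) := by
  rw [← limsup_natCast_mul m hm]
  refine le_of_forall_gt_imp_ge_of_dense fun w hw => ?_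
  obtain ⟨z, hz1, hz2⟩ := EReal.exists_between_coe_real hw
  obtain ⟨z', hz'1, hz'2⟩ := EReal.exists_between_coe_real hz2
  have hz'r : z < z' := by exact_mod_cast hz'1
  obtain ⟨N, hN⟩ := Filter.eventually_atTop.1 (Filter.eventually_lt_of_limsup_lt hz1)
  have ht : Filter.Tendsto (fun k : ℕ => z + |z| * m / (k : ℝ)) atTop (nhds z) := by
    have h0 : Filter.Tendsto (fun k : ℕ => (|z| * m) / (k : ℝ)) atTop (nhds 0) :=
      tendsto_const_nhds.div_atTop tendsto_natCast_atTop_atTop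
    simpa using tendsto_const_nhds.add h0
  have hev3 : ∀ᶠ k : ℕ in atTop, z + |z| * m / (k : ℝ) ≤ z' :=
    (ht.eventually_lt_const hz'r).mono fun k hk => hk.le
  have hev2 : ∀ᶠ k : ℕ in atTop,
      (m : EReal) * (((k : ℝ)⁻¹ : EReal) * ENNReal.log ((spanCardOr e T k ε K : ℝ≥0∞)))
        ≤ ((z' : ℝ) : EReal) := by
    filter_upwards [hev3, eventually_ge_atTop 1, eventually_ge_atTop (m * (N + 1))]
      with k hk1 hk2 hk3
    set n := k / m + 1 with hn
    have hmod := Nat.div_add_mod k m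
    have hmlt : k % m < m := Nat.mod_lt _ hm
    have hmuln : m * n = m * (k / m) + m := by rw [hn, Nat.mul_succ]
    have hklt : k < m * n := by omega
    have hmnle : m * n ≤ k + m := by omega
    have hdiv : N + 1 ≤ k / m := (Nat.le_div_iff_mul_le hm).2 (by rwa [Nat.mul_comm] at hk3)
    have hNn : N ≤ n := by omega
    have hb := hN n hNn
    rw [inv_mul_eq_div'] at hb
    have hn1 : (0 : EReal) < (n : EReal) := Nat.cast_pos'.2 (Nat.succ_pos _)
    have hlogs : ENNReal.log ((spanCardOr e (T^[m]) n (δ / 2) K : ℝ≥0∞))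
        ≤ (n : EReal) * ((z : ℝ) : EReal) :=
      (EReal.div_le_iff_le_mul hn1 (EReal.natCast_ne_top n)).1 hb.le
    have hspan : ((spanCardOr e T k ε K : ℝ≥0∞))
        ≤ ((spanCardOr e (T^[m]) n (δ / 2) K : ℝ≥0∞)) := by
      exact_mod_cast (spanCardOr_mono_n (T := T) he0 hklt.le ε K).trans
        (spanCardOr_transfer he0 hm hε hδ hP n K)
    have hlogr : ENNReal.log ((spanCardOr e T k ε K : ℝ≥0∞))
        ≤ (n : EReal) * ((z : ℝ) : EReal) := (ENNReal.log_monotone hspan).trans hlogs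
    rw [inv_mul_eq_div']
    have hck := EReal.monotone_div_right_of_nonneg (Nat.cast_nonneg' k) hlogr
    refine (natCast_mul_mono hm hck).trans ?_
    have hcast : (m : EReal) * ((n : EReal) * ((z : ℝ) : EReal) / (k : EReal))
        = ((((m : ℝ) * (((n : ℝ) * z) / (k : ℝ))) : ℝ) : EReal) := by
      rw [← EReal.coe_coe_eq_natCast m, ← EReal.coe_coe_eq_natCast n,
        ← EReal.coe_coe_eq_natCast k, ← EReal.coe_mul, ← EReal.coe_div, ← EReal.coe_mul]
    rw [hcast, EReal.coe_le_coe_iff]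
    -- now a real inequality
    have hk0 : (0 : ℝ) < (k : ℝ) := by exact_mod_cast hk2
    have hA1 : (k : ℝ) ≤ (m : ℝ) * n := by exact_mod_cast hklt.le
    have hA2 : (m : ℝ) * n ≤ (k : ℝ) + m := by exact_mod_cast hmnle
    have key : (m : ℝ) * ((n : ℝ) * z) ≤ (z + |z| * m / k) * k := by
      have h1 : (z + |z| * m / k) * k = z * k + |z| * m := by
        field_simp
      rw [h1]
      nlinarith [mul_nonneg (sub_nonneg.2 (le_abs_self z)) (sub_nonneg.2 hA1),
        mul_nonneg (abs_nonneg z) (sub_nonneg.2 hA2)]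
    calc (m : ℝ) * ((n : ℝ) * z / k) = (m : ℝ) * ((n : ℝ) * z) / k := by ring
      _ ≤ z + |z| * m / k := (div_le_iff₀ hk0).2 key
      _ ≤ z' := hk1
  exact (Filter.limsup_le_of_le (by isBoundedDefault) hev2).trans hz'2.le

end MainLemmas


/-- if `T` is uniformly continuous on the quasi-metric space
`(X,e)`, then `h''(T^m) = m · h''(T)`. -/
theorem stmt18 (e : X → X → ℝ) (T : X → X) (he : IsQuasiMetric e)
    (hT : ∀ ε : ℝ, 0 < ε → ∃ δ : ℝ, 0 < δ ∧ ∀ x y, e x y < δ → e (T x) (T y) < ε)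
    (m : ℕ) (hm : 1 ≤ m) :
    entropy'' e (T^[m]) = (m : EReal) * entropy'' e T := by
  obtain ⟨he0, -, -⟩ := he
  have hm0 : 0 < m := hm
  apply le_antisymm
  · simp only [entropy'']
    refine iSup₂_le fun K hK => iSup₂_le fun ε hε => ?_
    refine (main1 he0 hm0 ε K).trans (natCast_mul_mono hm0 ?_)
    exact le_iSup₂_of_le K hK (le_iSup₂_of_le ε hε le_rfl)
  · have hmpos : (0 : EReal) < (m : EReal) := Nat.cast_pos'.2 hm0
    rw [EReal.mul_comm, ← EReal.le_div_iff_mul_le hmpos (EReal.natCast_ne_top m)]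
    simp only [entropy'']
    refine iSup₂_le fun K hK => iSup₂_le fun ε hε => ?_
    rw [EReal.le_div_iff_mul_le hmpos (EReal.natCast_ne_top m), EReal.mul_comm]
    obtain ⟨δ, hδ, hP⟩ := unif_iter hT hε (m - 1)
    refine (main2 he0 hm0 hε hδ hP K).trans ?_
    exact le_iSup₂_of_le K hK (le_iSup₂_of_le (δ / 2) (half_pos hδ) le_rfl)
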